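/- arXiv:1301.1408 — 3 statements merged into one kernel-verified Lean document; each statement's English description precedes it below -/
import Mathlib

section
/- Let G₁ and G₂ be connected finite simple graphs containing no triangles (no complete subgraph on 3 vertices), with the same number of vertices and the same number of edges. If the Laplacians on functions L_0(G₁) and L_0(G₂) have the same eigenvalues with multiplicity, then the Laplacians on 1-forms L_1(G₁) and L_1(G₂) have the same eigenvalues with multiplicity; consequently the Dirac operators of G₁ and G₂ have the same eigenvalues with multiplicity. -/
open Matrix Finset BigOperators

variable {V : Type*} [Fintype V] [LinearOrder V]

/-- Incidence coefficient between finsets `t` and `s`: it is `(-1)^i` if `s` is obtained from `t`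
by deleting its `i`-th vertex (in the linear order on vertices), and `0` otherwise. This encodes
the exterior derivative `(d f)(x_0,…,x_{k+1}) = ∑ i (−1)^i f(x_0,…,x̂_i,…,x_{k+1})` on simplices
whose vertices are ordered increasingly. -/
def dEntry (t s : Finset V) : ℝ :=
  ∑ v ∈ t, if s = t.erase v then (-1 : ℝ) ^ (t.filter (· < v)).card else 0

variable (G : SimpleGraph V) [DecidableRel G.Adj]

/-- The set `𝒢_k` of `k`-simplices of `G`, i.e. the complete subgraphs on `k+1` vertices,
encoded as the `(k+1)`-cliques of `G`.  `Ω_k = Cl G k → ℝ` is the space of `k`-forms. -/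
abbrev Cl (k : ℕ) := {s : Finset V // s ∈ G.cliqueFinset (k + 1)}

/-- The set `𝒢` of all simplices (nonempty complete subgraphs) of `G`; the total space of forms
is `Ω = ⊕_k Ω_k = Simp G → ℝ`. -/
abbrev Simp := {s : Finset V // s.Nonempty ∧ s ∈ G.cliqueFinset s.card}

/-- The exterior derivative `d_k : Ω_k → Ω_{k+1}` as a matrix (its transpose is `d_k^*`). -/
def dMat (k : ℕ) : Matrix (Cl G (k + 1)) (Cl G k) ℝ := fun t s => dEntry t.1 s.1

/-- The Laplace–Beltrami block `L_p = d_p^* d_p + d_{p-1} d_{p-1}^*` on `Ω_p` (with `d_{-1} = 0`). -/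
def Lmat : (p : ℕ) → Matrix (Cl G p) (Cl G p) ℝ
  | 0 => (dMat G 0)ᵀ * dMat G 0
  | (k + 1) => (dMat G (k + 1))ᵀ * dMat G (k + 1) + dMat G k * (dMat G k)ᵀ

/-- The total exterior derivative `d = ⊕_k d_k` on `Ω`, as a matrix on the simplex set. -/
def dTot : Matrix (Simp G) (Simp G) ℝ := fun t s => dEntry t.1 s.1

/-- The Dirac operator `D = d + d^*` of `G`, as a symmetric matrix on the simplex set. -/
def Dmat : Matrix (Simp G) (Simp G) ℝ := dTot G + (dTot G)ᵀ

/-- The Euler characteristic `χ(G) = ∑_k (−1)^k v_k = ∑_{x ∈ 𝒢} (−1)^{dim x}`. -/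
def chi : ℤ := ∑ s : Simp G, (-1) ^ (s.1.card - 1)

/-- The supertrace `str(A) = tr(γ A)` where `γ` acts by `(−1)^k` on `Ω_k`. -/
def str {R : Type*} [CommRing R] (A : Matrix (Simp G) (Simp G) R) : R :=
  ∑ s : Simp G, (-1) ^ (s.1.card - 1) * A s s

/-- The `k`-th Betti number `b_k = dim ker d_k − rank d_{k−1}` (with `d_{−1} = 0`). -/
noncomputable def betti : ℕ → ℕ
  | 0 => Module.finrank ℝ (LinearMap.ker (dMat G 0).mulVecLin)
  | (k + 1) => Module.finrank ℝ (LinearMap.ker (dMat G (k + 1)).mulVecLin) - (dMat G k).rank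


/-!
Without triangles there are no 2-simplices, so `L₁ = d₀ d₀ᵀ` while `L₀ = d₀ᵀ d₀`; by Sylvester's
identity `X ^ v₀ χ(L₁) = X ^ v₁ χ(L₀)`, and the numbers of vertices and edges `v₀, v₁` fix the
powers of `X`. Ordering simplices as vertices then edges, `D` is the block matrix
`[[0, d₀ᵀ], [d₀, 0]]`, whose characteristic polynomial satisfies `X ^ v₁ χ(D) = X ^ v₀ χ(L₁)(X²)`.
Finally, Hermitian matrices have the same eigenvalues with multiplicity iff they have the same
characteristic polynomial.
-/

open Polynomial

namespace Matrix.IsHermitian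
variable {𝕜 m n : Type*} [RCLike 𝕜] [Fintype m] [DecidableEq m] [Fintype n] [DecidableEq n]

theorem exists_equiv_eigenvalues_eq_comp_iff_charpoly_eq {A : Matrix m m 𝕜} {B : Matrix n n 𝕜}
    (hA : A.IsHermitian) (hB : B.IsHermitian) :
    (∃ e : m ≃ n, hA.eigenvalues = hB.eigenvalues ∘ e) ↔ A.charpoly = B.charpoly := by
  constructor
  · rintro ⟨e, he⟩
    rw [hA.charpoly_eq, hB.charpoly_eq, he]
    exact e.prod_comp fun j => X - C (hB.eigenvalues j : 𝕜)
  · intro h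
    have hsorted : List.ofFn hA.eigenvalues₀ = List.ofFn hB.eigenvalues₀ := by
      rw [← hA.sort_roots_charpoly_eq_eigenvalues₀, ← hB.sort_roots_charpoly_eq_eigenvalues₀, h]
    have hcard : Fintype.card m = Fintype.card n := by
      simpa using congrArg List.length hsorted
    have hsorted_apply (k : Fin (Fintype.card m)) :
        hA.eigenvalues₀ k = hB.eigenvalues₀ (Fin.cast hcard k) := by
      have hk : (k : ℕ) < Fintype.card n := hcard ▸ k.isLt
      rw [show Fin.cast hcard k = ⟨k, hk⟩ from rfl]
      simpa [hk] using congrArg (fun l => l[(k : ℕ)]?) hsorted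
    refine ⟨(Fintype.equivOfCardEq (Fintype.card_fin _)).symm.trans
      ((finCongr hcard).trans (Fintype.equivOfCardEq (Fintype.card_fin _))), ?_⟩
    funext i
    simp [Matrix.IsHermitian.eigenvalues, hsorted_apply]

end Matrix.IsHermitian

namespace Matrix
variable {R m n : Type*} [CommRing R] [Fintype m] [DecidableEq m] [Fintype n] [DecidableEq n]

theorem X_pow_mul_charpoly_fromBlocks_zero₁₁_zero₂₂ (A : Matrix m n R) (B : Matrix n m R) :
    X ^ Fintype.card n * (fromBlocks 0 A B 0).charpoly
      = X ^ Fintype.card m * (B * A).charpoly.comp (X ^ 2) := by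
  have hchar : charmatrix (fromBlocks 0 A B 0)
      = fromBlocks (scalar m X) (-A.map C) (-B.map C) (scalar n X) := by
    refine Matrix.ext fun i j => ?_
    rcases i with i | i <;> rcases j with j | j <;> simp [charmatrix_apply, diagonal_apply]
  -- `[[1, A], [0, X]]` has determinant `X ^ card n` and turns the characteristic matrix into a
  -- block lower triangular one with Schur complement `X² - B A`.
  have hmul : charmatrix (fromBlocks 0 A B 0) * fromBlocks 1 (A.map C) 0 (scalar n X)
      = fromBlocks (scalar m X) 0 (-B.map C) (scalar n (X ^ 2) - (B * A).map C) := by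
    rw [hchar, fromBlocks_multiply]
    simp [-scalar_apply, scalar_comm, Commute.all, pow_two, sub_eq_neg_add]
  have hcomp (M : Matrix n n R) :
      (charmatrix M).map (compRingHom (X ^ 2 : R[X])) = scalar n (X ^ 2) - M.map C := by
    refine Matrix.ext fun i j => ?_
    by_cases hij : i = j <;> simp [hij]
  have hdet := congrArg det hmul
  rw [det_mul, det_fromBlocks_zero₂₁, det_fromBlocks_zero₁₂, ← hcomp, ← RingHom.mapMatrix_apply,
    ← RingHom.map_det] at hdet
  simpa [charpoly, mul_comm] using hdet

end Matrix

namespace SimpleGraph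
variable {α : Type*} [Fintype α] [DecidableEq α] (H : SimpleGraph α) [DecidableRel H.Adj]

theorem card_cliqueFinset_one : #(H.cliqueFinset 1) = Fintype.card α := by
  have : H.cliqueFinset 1 = univ.map ⟨singleton, singleton_injective⟩ := by
    ext s; simp [mem_cliqueFinset_iff, eq_comm]
  rw [this, card_map, card_univ]

theorem card_cliqueFinset_two : #(H.cliqueFinset 2) = #H.edgeFinset := by
  symm
  refine card_bij (fun e _ => e.toFinset) ?_ ?_ ?_
  · intro e he
    induction e with
    | _ a b =>
      rw [mem_edgeFinset, mem_edgeSet] at he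
      simp [Sym2.toFinset_mk_eq, mem_cliqueFinset_iff, isNClique_iff, he.ne, he]
  · intro e₁ _ e₂ _ h
    exact Sym2.ext fun x => by rw [← Sym2.mem_toFinset, h, Sym2.mem_toFinset]
  · intro s hs
    obtain ⟨hclique, hcard⟩ := mem_cliqueFinset_iff.mp hs
    obtain ⟨a, b, hab, rfl⟩ := card_eq_two.mp hcard
    exact ⟨s(a, b), by simpa using hclique (by simp) (by simp) hab, Sym2.toFinset_mk_eq⟩

end SimpleGraph

theorem dEntry_eq_zero_of_card_ne {α : Type*} [LinearOrder α] {t s : Finset α}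
    (h : s.card + 1 ≠ t.card) : dEntry t s = 0 := by
  refine sum_eq_zero fun v hv => if_neg fun hs => h ?_
  rw [hs, card_erase_add_one hv]

theorem Cl.card_eq {k : ℕ} (s : Cl G k) : s.1.card = k + 1 :=
  (SimpleGraph.mem_cliqueFinset_iff.mp s.2).2

theorem card_Cl_zero : Fintype.card (Cl G 0) = Fintype.card V := by
  rw [Fintype.card_coe, G.card_cliqueFinset_one]

theorem card_Cl_one : Fintype.card (Cl G 1) = #G.edgeFinset := by
  rw [Fintype.card_coe, G.card_cliqueFinset_two]

variable {G}

theorem Lmat_one_of_cliqueFree_three (ht : G.CliqueFree 3) :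
    Lmat G 1 = dMat G 0 * (dMat G 0)ᵀ := by
  have : IsEmpty (Cl G 2) := ⟨fun s => ht s.1 (SimpleGraph.mem_cliqueFinset_iff.mp s.2)⟩
  have hzero : (dMat G 1)ᵀ * dMat G 1 = 0 := Matrix.ext fun s t => by simp [Matrix.mul_apply]
  rw [Lmat, hzero, zero_add]

theorem X_pow_mul_charpoly_Lmat_one (ht : G.CliqueFree 3) :
    X ^ Fintype.card V * (Lmat G 1).charpoly = X ^ #G.edgeFinset * (Lmat G 0).charpoly := by
  rw [← card_Cl_zero G, ← card_Cl_one G, Lmat_one_of_cliqueFree_three ht]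
  exact Matrix.charpoly_mul_comm' _ _

def Cl.toSimp {k : ℕ} (s : Cl G k) : Simp G :=
  ⟨s.1, card_pos.mp (by rw [s.card_eq]; omega), by rw [s.card_eq]; exact s.2⟩

theorem Simp.card_eq_one_or_two (ht : G.CliqueFree 3) (s : Simp G) :
    s.1.card = 1 ∨ s.1.card = 2 := by
  have hpos : 0 < s.1.card := card_pos.mpr s.2.1
  have hlt : s.1.card < 3 := by
    by_contra! h
    exact ht.mono h s.1 (SimpleGraph.mem_cliqueFinset_iff.mp s.2.2)
  omega

noncomputable def sumClEquivSimp (ht : G.CliqueFree 3) : Cl G 0 ⊕ Cl G 1 ≃ Simp G := by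
  refine Equiv.ofBijective (Sum.elim Cl.toSimp Cl.toSimp) ⟨?_, ?_⟩
  · have hcard {k l : ℕ} {s : Cl G k} {t : Cl G l} (h : s.toSimp = t.toSimp) : k = l := by
      have := congrArg (fun x : Simp G => x.1.card) h
      simp only [Cl.toSimp, Cl.card_eq] at this
      omega
    rintro (s | s) (t | t) h
    · exact congrArg Sum.inl (Subtype.ext (congrArg (·.1) h :))
    · exact absurd (hcard h) (by omega)
    · exact absurd (hcard h) (by omega)
    · exact congrArg Sum.inr (Subtype.ext (congrArg (·.1) h :))
  · intro s
    rcases Simp.card_eq_one_or_two ht s with h | h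
    · exact ⟨Sum.inl ⟨s.1, by simpa [h] using s.2.2⟩, rfl⟩
    · exact ⟨Sum.inr ⟨s.1, by simpa [h] using s.2.2⟩, rfl⟩

theorem submatrix_dTot_sumClEquivSimp (ht : G.CliqueFree 3) :
    (dTot G).submatrix (sumClEquivSimp ht) (sumClEquivSimp ht)
      = Matrix.fromBlocks 0 0 (dMat G 0) 0 := by
  refine Matrix.ext fun i j => ?_
  rcases i with s | s <;> rcases j with t | t
  all_goals
    first
    | rfl
    | exact dEntry_eq_zero_of_card_ne (t := s.1) (s := t.1) (by rw [s.card_eq, t.card_eq]; omega)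

theorem X_pow_mul_charpoly_Dmat (ht : G.CliqueFree 3) :
    X ^ #G.edgeFinset * (Dmat G).charpoly
      = X ^ Fintype.card V * (Lmat G 1).charpoly.comp (X ^ 2) := by
  have hD : (Dmat G).submatrix (sumClEquivSimp ht) (sumClEquivSimp ht)
      = Matrix.fromBlocks 0 (dMat G 0)ᵀ (dMat G 0) 0 := by
    change (dTot G).submatrix _ _ + ((dTot G).submatrix _ _)ᵀ = _
    rw [submatrix_dTot_sumClEquivSimp, Matrix.fromBlocks_transpose, Matrix.fromBlocks_add]
    simp
  rw [← Matrix.charpoly_reindex (sumClEquivSimp ht).symm, Matrix.reindex_apply,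
    Equiv.symm_symm, hD, ← card_Cl_zero G, ← card_Cl_one G, Lmat_one_of_cliqueFree_three ht]
  exact Matrix.X_pow_mul_charpoly_fromBlocks_zero₁₁_zero₂₂ _ _

theorem isospectral_lifting_general {V₁ V₂ : Type*} [Fintype V₁] [LinearOrder V₁]
    [Fintype V₂] [LinearOrder V₂]
    (G₁ : SimpleGraph V₁) (G₂ : SimpleGraph V₂) [DecidableRel G₁.Adj] [DecidableRel G₂.Adj]
    (ht₁ : G₁.CliqueFree 3) (ht₂ : G₂.CliqueFree 3)
    (hv : Fintype.card V₁ = Fintype.card V₂)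
    (he : G₁.edgeFinset.card = G₂.edgeFinset.card)
    (h₁ : (Lmat G₁ 0).IsHermitian) (h₂ : (Lmat G₂ 0).IsHermitian)
    (hL₁ : (Lmat G₁ 1).IsHermitian) (hL₂ : (Lmat G₂ 1).IsHermitian)
    (hD₁ : (Dmat G₁).IsHermitian) (hD₂ : (Dmat G₂).IsHermitian)
    (hiso : ∃ e : Cl G₁ 0 ≃ Cl G₂ 0, h₁.eigenvalues = h₂.eigenvalues ∘ e) :
    (∃ e : Cl G₁ 1 ≃ Cl G₂ 1, hL₁.eigenvalues = hL₂.eigenvalues ∘ e) ∧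
    (∃ e : Simp G₁ ≃ Simp G₂, hD₁.eigenvalues = hD₂.eigenvalues ∘ e) := by
  have hchar₀ := (h₁.exists_equiv_eigenvalues_eq_comp_iff_charpoly_eq h₂).mp hiso
  have hchar₁ : (Lmat G₁ 1).charpoly = (Lmat G₂ 1).charpoly :=
    (isRegular_X_pow (Fintype.card V₁)).left.eq_iff.mp <| by
      rw [X_pow_mul_charpoly_Lmat_one ht₁, hv, X_pow_mul_charpoly_Lmat_one ht₂, he, hchar₀]
  have hcharD : (Dmat G₁).charpoly = (Dmat G₂).charpoly :=
    (isRegular_X_pow #G₁.edgeFinset).left.eq_iff.mp <| by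
      rw [X_pow_mul_charpoly_Dmat ht₁, he, X_pow_mul_charpoly_Dmat ht₂, hv, hchar₁]
  exact ⟨(hL₁.exists_equiv_eigenvalues_eq_comp_iff_charpoly_eq hL₂).mpr hchar₁,
    (hD₁.exists_equiv_eigenvalues_eq_comp_iff_charpoly_eq hD₂).mpr hcharD⟩

/-- Two connected triangle-free graphs with the same number of vertices and edges which are
isospectral for the Laplacian `L_0` on functions are also isospectral for the Laplacian `L_1`
on 1-forms, and consequently their Dirac operators are isospectral (eigenvalues counted with
multiplicity; "same eigenvalues with multiplicity" is expressed by a bijection of index sets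
carrying one eigenvalue listing to the other). -/
theorem isospectral_lifting {V₁ V₂ : Type*} [Fintype V₁] [LinearOrder V₁]
    [Fintype V₂] [LinearOrder V₂]
    (G₁ : SimpleGraph V₁) (G₂ : SimpleGraph V₂) [DecidableRel G₁.Adj] [DecidableRel G₂.Adj]
    (hc₁ : G₁.Connected) (hc₂ : G₂.Connected)
    (ht₁ : G₁.CliqueFree 3) (ht₂ : G₂.CliqueFree 3)
    (hv : Fintype.card V₁ = Fintype.card V₂)
    (he : G₁.edgeFinset.card = G₂.edgeFinset.card)
    (h₁ : (Lmat G₁ 0).IsHermitian) (h₂ : (Lmat G₂ 0).IsHermitian)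
    (hL₁ : (Lmat G₁ 1).IsHermitian) (hL₂ : (Lmat G₂ 1).IsHermitian)
    (hD₁ : (Dmat G₁).IsHermitian) (hD₂ : (Dmat G₂).IsHermitian)
    (hiso : ∃ e : Cl G₁ 0 ≃ Cl G₂ 0, h₁.eigenvalues = h₂.eigenvalues ∘ e) :
    (∃ e : Cl G₁ 1 ≃ Cl G₂ 1, hL₁.eigenvalues = hL₂.eigenvalues ∘ e) ∧
    (∃ e : Simp G₁ ≃ Simp G₂, hD₁.eigenvalues = hD₂.eigenvalues ∘ e) :=
  isospectral_lifting_general G₁ G₂ ht₁ ht₂ hv he h₁ h₂ hL₁ hL₂ hD₁ hD₂ hiso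
end

section
/- For every real number λ ≠ 0, the alternating sum of the dimensions of the λ-eigenspaces of the Laplace–Beltrami blocks vanishes: Σ_p (−1)^p dim(E_λ^p) = 0, where E_λ^p = ker(L_p − λ·Id) is the eigenspace of L_p on Ω_p for the eigenvalue λ. -/
open Matrix Finset BigOperators

variable {V : Type*} [Fintype V] [LinearOrder V]

variable (G : SimpleGraph V) [DecidableRel G.Adj]

/-! For `λ ≠ 0` the exterior derivative maps the `λ`-eigenspace of `L_p` into that of `L_{p+1}`,
because `L` commutes with `d`. The resulting complex `0 → E_λ^0 → E_λ^1 → ⋯` is exact: if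
`d y = 0` and `L y = λ y`, then `L y = d d* y`, so `y = d (d* y / λ)`. Hence
`dim E_λ^p = rank d_p + rank d_{p-1}` on eigenspaces, and the alternating sum telescopes. -/

open Module LinearMap

section ExactSequence

variable {K : Type*} [Field K]

theorem Function.Exact.finrank_eq_finrank_range_add_finrank_range {U W X : Type*}
    [AddCommGroup U] [Module K U] [AddCommGroup W] [Module K W] [FiniteDimensional K W]
    [AddCommGroup X] [Module K X] {f : U →ₗ[K] W} {g : W →ₗ[K] X} (h : Function.Exact f g) :
    finrank K W = finrank K (range g) + finrank K (range f) := by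
  rw [← g.finrank_range_add_finrank_ker, exact_iff.mp h]

variable {E : ℕ → Type*} [∀ p, AddCommGroup (E p)] [∀ p, Module K (E p)]
  [∀ p, FiniteDimensional K (E p)] {f : ∀ p, E p →ₗ[K] E (p + 1)}

theorem alternating_sum_finrank_of_exact (h₀ : Function.Injective (f 0))
    (hf : ∀ p, Function.Exact (f p) (f (p + 1))) (n : ℕ) :
    ∑ p ∈ Finset.range (n + 1), (-1 : ℤ) ^ p * (finrank K (E p) : ℤ) =
      (-1) ^ n * (finrank K (range (f n)) : ℤ) := by
  induction n with
  | zero => simp [finrank_range_of_inj h₀]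
  | succ n ih =>
    rw [Finset.sum_range_succ, ih, (hf n).finrank_eq_finrank_range_add_finrank_range]
    push_cast
    ring

theorem alternating_sum_finrank_eq_zero_of_exact (h₀ : Function.Injective (f 0))
    (hf : ∀ p, Function.Exact (f p) (f (p + 1))) {N : ℕ} (hN : finrank K (E N) = 0) :
    ∑ p ∈ Finset.range N, (-1 : ℤ) ^ p * (finrank K (E p) : ℤ) = 0 := by
  cases N with
  | zero => simp
  | succ n =>
    have : finrank K (range (f n)) = 0 := Nat.eq_zero_of_le_zero (hN ▸ Submodule.finrank_le _)
    simp [alternating_sum_finrank_of_exact h₀ hf, this]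

end ExactSequence

theorem neg_one_pow_card_filter_lt_erase_antisymm {α : Type*} [LinearOrder α] {t : Finset α}
    {v w : α} (hv : v ∈ t) (hvw : v < w) :
    (-1 : ℝ) ^ (t.filter (· < v)).card * (-1) ^ ((t.erase v).filter (· < w)).card =
      -((-1) ^ (t.filter (· < w)).card * (-1) ^ ((t.erase w).filter (· < v)).card) := by
  have hcard : ((t.erase v).filter (· < w)).card + 1 = (t.filter (· < w)).card := by
    rw [Finset.filter_erase]
    exact Finset.card_erase_add_one (Finset.mem_filter.2 ⟨hv, hvw⟩)
  have hfilter : (t.erase w).filter (· < v) = t.filter (· < v) := by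
    rw [Finset.filter_erase, Finset.erase_eq_of_notMem]
    simp [hvw.le]
  rw [hfilter, ← hcard, pow_succ]
  ring

theorem sum_sign_mul_dEntry_erase {α : Type*} [LinearOrder α] (t r : Finset α) :
    ∑ v ∈ t, (-1 : ℝ) ^ (t.filter (· < v)).card * dEntry (t.erase v) r = 0 := by
  set F : α × α → ℝ := fun p => if r = (t.erase p.1).erase p.2 then
    (-1 : ℝ) ^ (t.filter (· < p.1)).card * (-1) ^ ((t.erase p.1).filter (· < p.2)).card else 0
  have hexpand : ∑ v ∈ t, (-1 : ℝ) ^ (t.filter (· < v)).card * dEntry (t.erase v) r =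
      ∑ p ∈ t.offDiag, F p := by
    rw [Finset.sum_finset_product t.offDiag t t.erase (by simp [and_comm, and_left_comm, eq_comm])]
    refine Finset.sum_congr rfl fun v _ => ?_
    simp only [dEntry, Finset.mul_sum, mul_ite, mul_zero, F]
  -- removing `v` then `w` and removing `w` then `v` contribute with opposite signs
  have hswap : ∀ p ∈ t.offDiag, F p + F p.swap = 0 := by
    rintro ⟨v, w⟩ hp
    obtain ⟨hv, hw, hvw⟩ := Finset.mem_offDiag.1 hp
    simp only [F, Prod.swap_prod_mk, Finset.erase_right_comm (s := t) (a := w)]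
    split_ifs
    · rcases hvw.lt_or_gt with h | h
      · rw [neg_one_pow_card_filter_lt_erase_antisymm hv h, neg_add_cancel]
      · rw [neg_one_pow_card_filter_lt_erase_antisymm hw h, add_neg_cancel]
    · simp
  rw [hexpand]
  refine Finset.sum_involution (fun p _ => p.swap) hswap (fun p hp _ => ?_)
    (fun p hp => Finset.mem_offDiag.2 ?_) (fun p _ => p.swap_swap)
  · obtain ⟨-, -, hne⟩ := Finset.mem_offDiag.1 hp
    exact fun h => hne (Prod.ext_iff.1 h).2
  · obtain ⟨h1, h2, hne⟩ := Finset.mem_offDiag.1 hp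
    exact ⟨h2, h1, hne.symm⟩

theorem erase_mem_cliqueFinset {n : ℕ} {t : Finset V} (ht : t ∈ G.cliqueFinset (n + 2))
    {v : V} (hv : v ∈ t) : t.erase v ∈ G.cliqueFinset (n + 1) := by
  rw [SimpleGraph.mem_cliqueFinset_iff] at ht ⊢
  exact ⟨ht.1.subset (Finset.erase_subset _ _), by simp [Finset.card_erase_of_mem hv, ht.2]⟩

theorem sum_dEntry_mul {n : ℕ} {t : Finset V} (ht : t ∈ G.cliqueFinset (n + 2))
    (X : Finset V → ℝ) :
    ∑ s : Cl G n, dEntry t s.1 * X s.1 =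
      ∑ v ∈ t, (-1 : ℝ) ^ (t.filter (· < v)).card * X (t.erase v) := by
  simp only [dEntry, Finset.sum_mul]
  rw [Finset.sum_comm]
  refine Finset.sum_congr rfl fun v hv => ?_
  rw [Fintype.sum_eq_single ⟨t.erase v, erase_mem_cliqueFinset G ht hv⟩]
  · simp
  · intro s hs
    have : s.1 ≠ t.erase v := fun h => hs (Subtype.ext h)
    simp [this]

theorem dMat_mul_dMat (k : ℕ) : dMat G (k + 1) * dMat G k = 0 := by
  ext t r
  rw [Matrix.mul_apply]
  exact (sum_dEntry_mul G t.2 (dEntry · r.1)).trans (sum_sign_mul_dEntry_erase t.1 r.1)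

theorem Lmat_succ_mul_dMat (p : ℕ) : Lmat G (p + 1) * dMat G p = dMat G p * Lmat G p := by
  cases p with
  | zero =>
    simp only [Lmat, Matrix.add_mul, Matrix.mul_assoc, dMat_mul_dMat, Matrix.mul_zero, zero_add]
  | succ k =>
    simp only [Lmat]
    rw [Matrix.add_mul, Matrix.mul_assoc _ (dMat G (k + 2)), dMat_mul_dMat, Matrix.mul_zero,
      zero_add, Matrix.mul_add, ← Matrix.mul_assoc (dMat G (k + 1)) (dMat G k), dMat_mul_dMat,
      Matrix.zero_mul, add_zero, Matrix.mul_assoc]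

theorem Lmat_transpose (p : ℕ) : (Lmat G p)ᵀ = Lmat G p := by
  cases p <;> simp [Lmat, Matrix.transpose_mul]

theorem Lmat_mul_dMat_transpose (p : ℕ) :
    Lmat G p * (dMat G p)ᵀ = (dMat G p)ᵀ * Lmat G (p + 1) := by
  simpa only [Matrix.transpose_mul, Lmat_transpose] using
    (congrArg Matrix.transpose (Lmat_succ_mul_dMat G p)).symm

theorem Matrix.mulVec_mem_eigenspace_of_mul_eq_mul {R m n : Type*} [CommRing R] [Fintype m]
    [Fintype n] {A : Matrix m m R} {B : Matrix n n R} {M : Matrix m n R} (h : A * M = M * B)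
    {μ : R} {x : n → R}
    (hx : x ∈ End.eigenspace B.mulVecLin μ) : M *ᵥ x ∈ End.eigenspace A.mulVecLin μ := by
  rw [End.mem_eigenspace_iff, mulVecLin_apply] at hx ⊢
  rw [mulVec_mulVec, h, ← mulVec_mulVec, hx, mulVec_smul]

section EigenComplex

variable (lam : ℝ)

def dEigen (p : ℕ) : End.eigenspace (Lmat G p).mulVecLin lam →ₗ[ℝ]
    End.eigenspace (Lmat G (p + 1)).mulVecLin lam :=
  (dMat G p).mulVecLin.restrict fun _ =>
    Matrix.mulVec_mem_eigenspace_of_mul_eq_mul (Lmat_succ_mul_dMat G p)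

variable {lam}

theorem dEigen_zero_injective (hlam : lam ≠ 0) : Function.Injective (dEigen G lam 0) := by
  rw [← ker_eq_bot, ker_eq_bot']
  rintro ⟨x, hx⟩ hdx
  have hdx : dMat G 0 *ᵥ x = 0 := congrArg Subtype.val hdx
  have hLx : Lmat G 0 *ᵥ x = lam • x := End.mem_eigenspace_iff.1 hx
  rw [Lmat, ← Matrix.mulVec_mulVec, hdx, Matrix.mulVec_zero] at hLx
  exact Subtype.ext (smul_eq_zero.1 hLx.symm |>.resolve_left hlam)

theorem dEigen_exact (hlam : lam ≠ 0) (p : ℕ) :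
    Function.Exact (dEigen G lam p) (dEigen G lam (p + 1)) := by
  intro y
  constructor
  · obtain ⟨y, hy⟩ := y
    intro hdy
    have hdy : dMat G (p + 1) *ᵥ y = 0 := congrArg Subtype.val hdy
    have hLy : Lmat G (p + 1) *ᵥ y = lam • y := End.mem_eigenspace_iff.1 hy
    -- on closed forms `L = d dᵀ`, so `dᵀ y / lam` is a primitive of `y`
    rw [Lmat, Matrix.add_mulVec, ← Matrix.mulVec_mulVec, hdy, Matrix.mulVec_zero, zero_add,
      ← Matrix.mulVec_mulVec] at hLy
    have hx : lam⁻¹ • (dMat G p)ᵀ *ᵥ y ∈ End.eigenspace (Lmat G p).mulVecLin lam :=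
      Submodule.smul_mem _ _
        (Matrix.mulVec_mem_eigenspace_of_mul_eq_mul (Lmat_mul_dMat_transpose G p) hy)
    refine ⟨⟨_, hx⟩, Subtype.ext ?_⟩
    change dMat G p *ᵥ (lam⁻¹ • (dMat G p)ᵀ *ᵥ y) = y
    rw [Matrix.mulVec_smul, hLy, smul_smul, inv_mul_cancel₀ hlam, one_smul]
  · rintro ⟨x, rfl⟩
    refine Subtype.ext ?_
    change dMat G (p + 1) *ᵥ (dMat G p *ᵥ x.1) = 0
    rw [Matrix.mulVec_mulVec, dMat_mul_dMat, Matrix.zero_mulVec]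

end EigenComplex

theorem isEmpty_Cl {k : ℕ} (hk : Fintype.card V ≤ k) : IsEmpty (Cl G k) :=
  ⟨fun ⟨s, hs⟩ => by
    have := (SimpleGraph.mem_cliqueFinset_iff.1 hs).2 ▸ s.card_le_univ
    omega⟩

theorem finrank_eigenspace_Lmat_eq_zero {k : ℕ} (hk : Fintype.card V ≤ k) (lam : ℝ) :
    finrank ℝ (End.eigenspace (Lmat G k).mulVecLin lam) = 0 := by
  have := isEmpty_Cl G hk
  exact Nat.eq_zero_of_le_zero <| (Submodule.finrank_le _).trans (by simp)

/-- **McKean–Singer (eigenspace form).** For every `λ ≠ 0`, the alternating sum of the dimensions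
of the `λ`-eigenspaces of the Laplace–Beltrami blocks vanishes: `∑_p (−1)^p dim E_λ^p = 0`
(the sum over all `p` equals the sum over `p < N` for any `N ≥ |V|`). -/
theorem alternating_sum_eigenspace_dim (lam : ℝ) (hlam : lam ≠ 0)
    (N : ℕ) (hN : Fintype.card V ≤ N) :
    ∑ p ∈ Finset.range N, (-1 : ℤ) ^ p *
      (Module.finrank ℝ (Module.End.eigenspace (Lmat G p).mulVecLin lam) : ℤ) = 0 :=
  alternating_sum_finrank_eq_zero_of_exact (dEigen_zero_injective G hlam) (dEigen_exact G hlam)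
    (finrank_eigenspace_Lmat_eq_zero G hN lam)
end

section
/- Hodge decomposition: the space of forms decomposes as the orthogonal direct sum Ω = im(d) ⊕ im(d*) ⊕ ker(L); in particular every g ∈ Ω can be written as g = d f + d* h + k where L k = 0, and the three summands are pairwise orthogonal. -/
open Matrix Finset BigOperators

variable {V : Type*} [Fintype V] [LinearOrder V]

variable (G : SimpleGraph V) [DecidableRel G.Adj]

/-! `d ∘ d = 0` because deleting two vertices `v ≠ w` of a simplex in either order gives the same
face with opposite signs, so the terms of `(d d) t r` cancel in pairs; hence `im d ⊥ im d*`.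
Since `⟨k, L k⟩ = |d* k|² + |d k|²`, a harmonic form `k` satisfies `d k = 0` and `d* k = 0`, which
makes it orthogonal to `im d` and `im d*`. Finally `L` is symmetric, so its range and kernel are
complementary subspaces, and `g = L u + k = d (d* u) + d* (d u) + k`. -/

theorem Finset.sum_sum_eq_zero_of_antisymm {ι M : Type*} [AddCommGroup M] [IsAddTorsionFree M]
    (s : Finset ι) (f : ι → ι → M) (hf : ∀ i ∈ s, ∀ j ∈ s, f i j = -f j i) :
    ∑ i ∈ s, ∑ j ∈ s, f i j = 0 :=
  self_eq_neg.mp <| calc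
    ∑ i ∈ s, ∑ j ∈ s, f i j = ∑ i ∈ s, ∑ j ∈ s, -f j i :=
      sum_congr rfl fun i hi => sum_congr rfl fun j hj => hf i hi j hj
    _ = -∑ i ∈ s, ∑ j ∈ s, f i j := by rw [sum_comm]; simp only [sum_neg_distrib]

section FaceSign

variable {α : Type*} [LinearOrder α]

def faceSign (t : Finset α) (v : α) : ℝ := (-1) ^ #{u ∈ t | u < v}

theorem faceSign_mul_faceSign_erase_of_lt {t : Finset α} {v w : α} (hv : v ∈ t) (hvw : v < w) :
    faceSign t v * faceSign (t.erase v) w = -(faceSign t w * faceSign (t.erase w) v) := by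
  have h_erase_w : #{u ∈ t.erase w | u < v} = #{u ∈ t | u < v} := by
    rw [filter_erase, erase_eq_of_notMem (by simp [hvw.le])]
  have h_erase_v : #{u ∈ t.erase v | u < w} + 1 = #{u ∈ t | u < w} := by
    rw [filter_erase]
    exact card_erase_add_one (by simp [hv, hvw])
  simp only [faceSign, h_erase_w, ← h_erase_v, pow_succ]
  ring

theorem faceSign_mul_faceSign_erase {t : Finset α} {v w : α} (hv : v ∈ t) (hw : w ∈ t)
    (hvw : v ≠ w) :
    faceSign t v * faceSign (t.erase v) w = -(faceSign t w * faceSign (t.erase w) v) := by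
  rcases hvw.lt_or_gt with h | h
  · exact faceSign_mul_faceSign_erase_of_lt hv h
  · rw [faceSign_mul_faceSign_erase_of_lt hw h, neg_neg]

theorem dEntry_eq_sum_faceSign (t s : Finset α) :
    dEntry t s = ∑ v ∈ t, if s = t.erase v then faceSign t v else 0 := rfl

theorem sum_faceSign_mul_dEntry_erase (t r : Finset α) :
    ∑ v ∈ t, faceSign t v * dEntry (t.erase v) r = 0 := by
  let F v w : ℝ := if v = w then 0 else
    faceSign t v * if r = (t.erase v).erase w then faceSign (t.erase v) w else 0
  have hF : ∀ v ∈ t, faceSign t v * dEntry (t.erase v) r = ∑ w ∈ t, F v w := by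
    intro v _
    rw [← sum_erase t (f := F v) (if_pos rfl), dEntry_eq_sum_faceSign, mul_sum]
    exact sum_congr rfl fun w hw => by
      simp only [F, if_neg (ne_of_mem_erase hw).symm, mul_ite, mul_zero]
  rw [sum_congr rfl hF]
  refine sum_sum_eq_zero_of_antisymm t F fun v hv w hw => ?_
  by_cases hvw : v = w
  · simp [F, hvw]
  · simp only [F, if_neg hvw, if_neg (Ne.symm hvw), erase_right_comm (a := v) (b := w), mul_ite,
      mul_zero, faceSign_mul_faceSign_erase hv hw hvw]
    split_ifs <;> simp

end FaceSign

theorem sum_simp_ite_val_eq_of_subset {t : Simp G} {u : Finset V} (hu : u ⊆ t.1)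
    {φ : Finset V → ℝ} (hφ : φ ∅ = 0) :
    ∑ s : Simp G, (if s.1 = u then φ s.1 else 0) = φ u := by
  rcases u.eq_empty_or_nonempty with rfl | hne
  · rw [hφ]
    exact sum_eq_zero fun s _ => if_neg s.2.1.ne_empty
  · have hface : u ∈ G.cliqueFinset #u :=
      G.mem_cliqueFinset_iff.2 ⟨(G.mem_cliqueFinset_iff.1 t.2.2).isClique.subset hu, rfl⟩
    rw [Fintype.sum_eq_single ⟨u, hne, hface⟩ fun s hs => if_neg fun h => hs (Subtype.ext h)]
    exact if_pos rfl

theorem dTot_mul_dTot_apply (t r : Simp G) :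
    (dTot G * dTot G) t r = ∑ v ∈ t.1, faceSign t.1 v * dEntry (t.1.erase v) r.1 := by
  simp only [mul_apply, dTot, dEntry_eq_sum_faceSign t.1, sum_mul, ite_mul, zero_mul]
  rw [sum_comm]
  exact sum_congr rfl fun v _ => sum_simp_ite_val_eq_of_subset G (erase_subset v t.1)
    (φ := fun u => faceSign t.1 v * dEntry u r.1) (by simp [dEntry])

theorem dTot_mul_dTot : dTot G * dTot G = 0 := by
  ext t r
  rw [dTot_mul_dTot_apply, sum_faceSign_mul_dEntry_erase, Matrix.zero_apply]

namespace Matrix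

variable {n R : Type*} [Fintype n]

def hodgeLaplacian [Semiring R] (d : Matrix n n R) : Matrix n n R := d * dᵀ + dᵀ * d

theorem isSymm_hodgeLaplacian [CommSemiring R] (d : Matrix n n R) : d.hodgeLaplacian.IsSymm := by
  rw [IsSymm, hodgeLaplacian, transpose_add, transpose_mul, transpose_mul, transpose_transpose,
    add_comm]

theorem mulVec_dotProduct_transpose_mulVec_eq_zero [CommSemiring R] {d : Matrix n n R}
    (hd : d * d = 0) (f g : n → R) : d *ᵥ f ⬝ᵥ dᵀ *ᵥ g = 0 := by
  rw [dotProduct_mulVec, vecMul_transpose, mulVec_mulVec, hd, zero_mulVec, zero_dotProduct]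

theorem mulVec_dotProduct_eq_zero_of_transpose_mulVec_eq_zero [CommSemiring R] {d : Matrix n n R}
    {k : n → R} (hk : dᵀ *ᵥ k = 0) (f : n → R) : d *ᵥ f ⬝ᵥ k = 0 := by
  rw [dotProduct_comm, dotProduct_mulVec, ← mulVec_transpose, hk, zero_dotProduct]

theorem hodgeLaplacian_mulVec_eq_zero_iff [CommRing R] [LinearOrder R] [IsStrictOrderedRing R]
    (d : Matrix n n R) (k : n → R) :
    d.hodgeLaplacian *ᵥ k = 0 ↔ d *ᵥ k = 0 ∧ dᵀ *ᵥ k = 0 := by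
  refine ⟨fun hk => ?_, fun ⟨h, hT⟩ => ?_⟩
  · have hsq : dᵀ *ᵥ k ⬝ᵥ dᵀ *ᵥ k + d *ᵥ k ⬝ᵥ d *ᵥ k = 0 := by
      have := congr_arg (k ⬝ᵥ ·) hk
      simpa only [hodgeLaplacian, add_mulVec, ← mulVec_mulVec, dotProduct_add, dotProduct_mulVec,
        ← mulVec_transpose, transpose_transpose, dotProduct_zero] using this
    have hnonneg (v : n → R) : 0 ≤ v ⬝ᵥ v := sum_nonneg fun i _ => mul_self_nonneg (v i)
    rw [add_eq_zero_iff_of_nonneg (hnonneg _) (hnonneg _), dotProduct_self_eq_zero,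
      dotProduct_self_eq_zero] at hsq
    exact hsq.symm
  · rw [hodgeLaplacian, add_mulVec, ← mulVec_mulVec, ← mulVec_mulVec, h, hT, mulVec_zero,
      mulVec_zero, add_zero]

variable [Field R] [LinearOrder R] [IsStrictOrderedRing R]

theorem IsSymm.isCompl_range_ker {A : Matrix n n R} (hA : A.IsSymm) :
    IsCompl (LinearMap.range A.mulVecLin) (LinearMap.ker A.mulVecLin) := by
  refine (Submodule.isCompl_iff_disjoint _ _ (LinearMap.finrank_range_add_finrank_ker _).ge).2 ?_
  rw [Submodule.disjoint_def]
  rintro _ ⟨u, rfl⟩ hAu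
  rw [LinearMap.mem_ker, mulVecLin_apply, mulVecLin_apply] at hAu
  rw [mulVecLin_apply, ← dotProduct_self_eq_zero, dotProduct_comm, dotProduct_mulVec,
    ← mulVec_transpose, hA.eq, hAu, zero_dotProduct]

theorem exists_hodge_decomposition (d : Matrix n n R) (g : n → R) :
    ∃ f h k, d.hodgeLaplacian *ᵥ k = 0 ∧ g = d *ᵥ f + dᵀ *ᵥ h + k := by
  obtain ⟨_, ⟨u, rfl⟩, k, hk, hg⟩ := Submodule.mem_sup.1 <|
    d.isSymm_hodgeLaplacian.isCompl_range_ker.sup_eq_top ▸ Submodule.mem_top (x := g)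
  refine ⟨dᵀ *ᵥ u, d *ᵥ u, k, hk, ?_⟩
  rw [← hg, mulVecLin_apply, hodgeLaplacian, add_mulVec, mulVec_mulVec, mulVec_mulVec]

end Matrix

/-- **Hodge decomposition.** `Ω = im(d) ⊕ im(d*) ⊕ ker(L)` as an orthogonal direct sum: the three
subspaces are pairwise orthogonal and every `g ∈ Ω` can be written as `g = d f + d* h + k`
with `L k = 0`. -/
theorem hodge_decomposition :
    (∀ f g : Simp G → ℝ, (dTot G).mulVec f ⬝ᵥ (dTot G)ᵀ.mulVec g = 0) ∧
    (∀ f k : Simp G → ℝ,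
      ((dTot G * (dTot G)ᵀ + (dTot G)ᵀ * dTot G).mulVec k = 0) →
        (dTot G).mulVec f ⬝ᵥ k = 0) ∧
    (∀ h k : Simp G → ℝ,
      ((dTot G * (dTot G)ᵀ + (dTot G)ᵀ * dTot G).mulVec k = 0) →
        (dTot G)ᵀ.mulVec h ⬝ᵥ k = 0) ∧
    (∀ g : Simp G → ℝ, ∃ f h k : Simp G → ℝ,
      (dTot G * (dTot G)ᵀ + (dTot G)ᵀ * dTot G).mulVec k = 0 ∧
      g = (dTot G).mulVec f + (dTot G)ᵀ.mulVec h + k) := by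
  have harmonic {k : Simp G → ℝ} (hk : (dTot G).hodgeLaplacian *ᵥ k = 0) :=
    ((dTot G).hodgeLaplacian_mulVec_eq_zero_iff k).1 hk
  refine ⟨mulVec_dotProduct_transpose_mulVec_eq_zero (dTot_mul_dTot G), fun f k hk => ?_,
    fun h k hk => ?_, exists_hodge_decomposition (dTot G)⟩
  · exact mulVec_dotProduct_eq_zero_of_transpose_mulVec_eq_zero (harmonic hk).2 f
  · exact mulVec_dotProduct_eq_zero_of_transpose_mulVec_eq_zero
      (by rw [transpose_transpose]; exact (harmonic hk).1) h
end
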